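/- arXiv:2410.12569 — 8 statements merged into one kernel-verified Lean document; each statement's English description precedes it below -/
import Mathlib

section
/- A probabilistic language L : Σ* → [0,1] is computed by some probabilistic finite automaton if and only if there exists a finite monoid M, a probabilistic monoid morphism h : Σ* → D M, and a probabilistic predicate p : M → [0,1] such that L(w) = ∑_{m∈M} h(w)(m)·p(m) for all w. -/
/-!
A PFA with states `Q` induces a probabilistic monoid morphism into the finite monoid of maps
`Q → Q`: to read a letter `a`, draw independently for every state `q` a successor from
`δ q a`. Each coordinate `f q` of the random map then has law `δ q a`, so summing over runs of
the automaton is the same as summing over maps `f`, weighted by the predicate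
`p f = ∑ q, i q * o (f q)`. Conversely, a morphism `h` into a finite monoid `M` is simulated by
the PFA with states `M` that starts from `h []` and, on reading `a`, multiplies its state on
the right by an element drawn from `h [a]`.
-/

/-- A probability distribution on a finite type. -/
def IsDist {A : Type*} [Fintype A] (d : A → ℝ) : Prop :=
  (∀ a, 0 ≤ d a) ∧ ∑ a, d a = 1

/-- Probabilistic recognition of a language `L : Σ* → [0,1]` by a finite monoid:
    a probabilistic monoid morphism `h : Σ* → D M` together with a probabilistic
    predicate `p : M → [0,1]` such that `L w = ∑_m h w m · p m`. -/
structure ProbMonoidRecognizer (A : Type) (L : List A → ℝ) where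
  M : Type
  [fin : Fintype M]
  [dec : DecidableEq M]
  [mon : Monoid M]
  h : List A → M → ℝ
  p : M → ℝ
  h_dist : ∀ w, IsDist (h w)
  h_unit : ∀ m, h [] m = if m = 1 then 1 else 0
  h_mul : ∀ v w m, h (v ++ w) m = ∑ x : M × M, if x.1 * x.2 = m then h v x.1 * h w x.2 else 0
  p_mem : ∀ m, p m ∈ Set.Icc (0 : ℝ) 1
  recog : ∀ w, L w = ∑ m, h w m * p m

open Finset

section IsDist

variable {α β : Type*} [Fintype α] [Fintype β]

lemma IsDist.comp_equiv {d : β → ℝ} (hd : IsDist d) (e : α ≃ β) : IsDist (d ∘ e) :=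
  ⟨fun _ => hd.1 _, by rw [Function.comp_def, Equiv.sum_comp e d]; exact hd.2⟩

lemma isDist_ite_eq [DecidableEq α] (a : α) : IsDist fun x => if x = a then 1 else 0 :=
  ⟨fun _ => ite_nonneg zero_le_one le_rfl, by simp⟩

lemma IsDist.map [DecidableEq β] {d : α → ℝ} (hd : IsDist d) (f : α → β) :
    IsDist fun b => ∑ a, if f a = b then d a else 0 := by
  refine ⟨fun b => sum_nonneg fun a _ => ?_, ?_⟩
  · split_ifs
    exacts [hd.1 a, le_rfl]
  · rw [sum_comm]
    simpa using hd.2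

lemma IsDist.prod {u : α → ℝ} {v : β → ℝ} (hu : IsDist u) (hv : IsDist v) :
    IsDist fun x : α × β => u x.1 * v x.2 :=
  ⟨fun _ => mul_nonneg (hu.1 _) (hv.1 _), by
    rw [Fintype.sum_prod_type, ← Fintype.sum_mul_sum, hu.2, hv.2, one_mul]⟩

variable {ι : Type*} [Fintype ι] [DecidableEq ι]

lemma IsDist.pi {d : ι → α → ℝ} (hd : ∀ i, IsDist (d i)) :
    IsDist fun g : ι → α => ∏ i, d i (g i) :=
  ⟨fun _ => prod_nonneg fun i _ => (hd i).1 _, by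
    rw [← Fintype.prod_sum]
    exact prod_eq_one fun i _ => (hd i).2⟩

lemma sum_prod_mul_apply {d : ι → α → ℝ} (hd : ∀ i, ∑ a, d i a = 1) (i₀ : ι) (F : α → ℝ) :
    ∑ g : ι → α, (∏ i, d i (g i)) * F (g i₀) = ∑ a, d i₀ a * F a := by
  have hsplit : ∀ g : ι → α, (∏ i, d i (g i)) * F (g i₀) =
      ∏ i, d i (g i) * if i = i₀ then F (g i) else 1 := fun g => by
    rw [prod_mul_distrib, prod_ite_eq' univ i₀, if_pos (mem_univ i₀)]
  rw [sum_congr rfl fun g _ => hsplit g,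
    ← Fintype.prod_sum fun i a => d i a * if i = i₀ then F a else 1,
    prod_eq_single i₀ (fun i _ hi => by simp [hi, hd i]) (by simp)]
  simp

end IsDist

section Conv

variable {M : Type*} [Fintype M]

noncomputable def toMonoidAlgebra (u : M → ℝ) : MonoidAlgebra ℝ M :=
  MonoidAlgebra.ofCoeff (Finsupp.equivFunOnFinite.symm u)

lemma toMonoidAlgebra_injective : Function.Injective (toMonoidAlgebra (M := M)) :=
  fun _ _ h => Finsupp.equivFunOnFinite.symm.injective (congrArg MonoidAlgebra.coeff h)

variable [DecidableEq M] [Monoid M]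

def conv (u v : M → ℝ) (m : M) : ℝ :=
  ∑ x : M × M, if x.1 * x.2 = m then u x.1 * v x.2 else 0

lemma IsDist.conv {u v : M → ℝ} (hu : IsDist u) (hv : IsDist v) : IsDist (conv u v) :=
  (hu.prod hv).map fun x => x.1 * x.2

lemma sum_conv_mul (u v φ : M → ℝ) :
    ∑ m, conv u v m * φ m = ∑ x, ∑ y, u x * v y * φ (x * y) := by
  simp only [conv, sum_mul, ite_mul, zero_mul]
  rw [sum_comm, Fintype.sum_prod_type]
  simp

lemma toMonoidAlgebra_conv (u v : M → ℝ) :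
    toMonoidAlgebra (conv u v) = toMonoidAlgebra u * toMonoidAlgebra v := by
  refine MonoidAlgebra.ext (Finsupp.ext fun m => ?_)
  rw [MonoidAlgebra.coeff_mul_antidiag _ _ m (univ.filter fun x => x.1 * x.2 = m) (by simp),
    sum_filter]
  rfl

lemma conv_assoc (u v w : M → ℝ) : conv (conv u v) w = conv u (conv v w) :=
  toMonoidAlgebra_injective <| by simp only [toMonoidAlgebra_conv, mul_assoc]

lemma one_conv (v : M → ℝ) : conv (fun m => if m = 1 then 1 else 0) v = v := by
  funext m
  rw [conv, Fintype.sum_prod_type, sum_eq_single (1 : M) (fun x _ hx => by simp [hx]) (by simp)]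
  simp

end Conv

section PFA

variable {A Q : Type*} [Fintype Q]

def pfaLang (i : Q → ℝ) (δ : Q → A → Q → ℝ) (o : Q → ℝ) (w : List A) : ℝ :=
  ∑ q : Fin (w.length + 1) → Q,
    i (q 0) * (∏ j : Fin w.length, δ (q j.castSucc) (w.get j) (q j.succ)) *
      o (q (Fin.last w.length))

def step (u : Q → ℝ) (δ : Q → A → Q → ℝ) (a : A) (s : Q) : ℝ :=
  ∑ q, u q * δ q a s

lemma pfaLang_nil (i : Q → ℝ) (δ : Q → A → Q → ℝ) (o : Q → ℝ) :
    pfaLang i δ o [] = ∑ q, i q * o q :=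
  Fintype.sum_equiv (Equiv.funUnique (Fin 1) Q) _ _ fun q => by simp [Fin.fin_one_eq_zero]

lemma pfaLang_cons (i : Q → ℝ) (δ : Q → A → Q → ℝ) (o : Q → ℝ) (a : A) (w : List A) :
    pfaLang i δ o (a :: w) = pfaLang (step i δ a) δ o w := by
  rw [pfaLang, pfaLang, ← Equiv.sum_comp (Fin.consEquiv fun _ => Q), Fintype.sum_prod_type,
    sum_comm]
  refine sum_congr rfl fun q _ => ?_
  simp only [step, sum_mul]
  refine sum_congr rfl fun q₀ _ => ?_
  simp only [Fin.consEquiv_apply, List.length_cons, Fin.prod_univ_succ, Fin.cons_zero,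
    Fin.cons_succ, Fin.castSucc_zero, ← Fin.succ_castSucc, ← Fin.succ_last, List.get_eq_getElem,
    Fin.val_succ, List.getElem_cons_succ, Fin.val_zero, List.getElem_cons_zero]
  ring

lemma pfaLang_equiv {Q' : Type*} [Fintype Q'] (e : Q' ≃ Q) (i : Q → ℝ) (δ : Q → A → Q → ℝ)
    (o : Q → ℝ) (w : List A) :
    pfaLang (i ∘ e) (fun q a q' => δ (e q) a (e q')) (o ∘ e) w = pfaLang i δ o w :=
  Fintype.sum_equiv ((Equiv.refl _).arrowCongr e) _ _ fun _ => rfl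

end PFA

section Forward

variable {Q : Type*}

/-- Composition in diagrammatic order, so that the map of a word `v ++ w` runs that of `v`
first. -/
abbrev transformationMonoid (Q : Type*) : Monoid (Q → Q) where
  one := id
  mul f g := g ∘ f
  mul_assoc _ _ _ := rfl
  one_mul _ := rfl
  mul_one _ := rfl

attribute [local instance] transformationMonoid

lemma transformationMonoid_mul_apply (f g : Q → Q) (q : Q) : (f * g) q = g (f q) := rfl

variable {A : Type*} [Fintype Q] [DecidableEq Q]

def letterDist (δ : Q → A → Q → ℝ) (a : A) (g : Q → Q) : ℝ :=
  ∏ q, δ q a (g q)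

def wordDist (δ : Q → A → Q → ℝ) : List A → (Q → Q) → ℝ
  | [] => fun f => if f = 1 then 1 else 0
  | a :: w => conv (letterDist δ a) (wordDist δ w)

lemma isDist_wordDist {δ : Q → A → Q → ℝ} (hδ : ∀ q a, IsDist (δ q a)) (w : List A) :
    IsDist (wordDist δ w) := by
  induction w with
  | nil => exact isDist_ite_eq 1
  | cons a w ih => exact (IsDist.pi fun q => hδ q a).conv ih

lemma wordDist_append (δ : Q → A → Q → ℝ) (v w : List A) :
    wordDist δ (v ++ w) = conv (wordDist δ v) (wordDist δ w) := by
  induction v with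
  | nil => exact (one_conv _).symm
  | cons a v ih => rw [List.cons_append, wordDist, wordDist, ih, conv_assoc]

lemma pfaLang_eq_sum_wordDist {δ : Q → A → Q → ℝ} (hδ : ∀ q a, ∑ s, δ q a s = 1)
    (i o : Q → ℝ) (w : List A) :
    pfaLang i δ o w = ∑ f, wordDist δ w f * ∑ q, i q * o (f q) := by
  induction w generalizing i with
  | nil =>
    rw [pfaLang_nil, wordDist, sum_eq_single (1 : Q → Q) (fun f _ hf => by simp [hf]) (by simp)]
    simp only [if_pos, one_mul]
    rfl
  | cons a w ih =>
    rw [pfaLang_cons, ih, wordDist, sum_conv_mul, sum_comm]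
    refine sum_congr rfl fun f _ => ?_
    have hmarginal (q : Q) : ∑ g, letterDist δ a g * o (f (g q)) = ∑ s, δ q a s * o (f s) :=
      sum_prod_mul_apply (fun r => hδ r a) q (o ∘ f)
    calc wordDist δ w f * ∑ s, step i δ a s * o (f s)
        = wordDist δ w f * ∑ q, i q * ∑ s, δ q a s * o (f s) := by
          simp only [step, sum_mul, mul_sum, mul_assoc]
          rw [sum_comm]
      _ = wordDist δ w f * ∑ q, i q * ∑ g, letterDist δ a g * o (f (g q)) := by
          simp only [hmarginal]
      _ = ∑ g, letterDist δ a g * wordDist δ w f * ∑ q, i q * o ((g * f) q) := by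
          simp only [mul_sum]
          rw [sum_comm]
          exact sum_congr rfl fun g _ => sum_congr rfl fun q _ => by
            rw [transformationMonoid_mul_apply]; ring

end Forward

section Backward

variable {A M : Type*} [Fintype M] [DecidableEq M] [Monoid M]

def rightMulKernel (d : A → M → ℝ) (m : M) (a : A) (m' : M) : ℝ :=
  ∑ n, if m * n = m' then d a n else 0

lemma step_rightMulKernel (u : M → ℝ) (d : A → M → ℝ) (a : A) :
    step u (rightMulKernel d) a = conv u (d a) := by
  funext m'
  simp only [step, rightMulKernel, conv, mul_sum, mul_ite, mul_zero, Fintype.sum_prod_type]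

lemma pfaLang_rightMulKernel {h : List A → M → ℝ}
    (hmul : ∀ v w, h (v ++ w) = conv (h v) (h w)) (p : M → ℝ) (v w : List A) :
    pfaLang (h v) (rightMulKernel fun a => h [a]) p w = ∑ m, h (v ++ w) m * p m := by
  induction w generalizing v with
  | nil => rw [pfaLang_nil, List.append_nil]
  | cons a w ih =>
    rw [pfaLang_cons, step_rightMulKernel, ← hmul, ih, List.append_assoc, List.singleton_append]

end Backward

namespace ProbMonoidRecognizer

variable {A : Type} {L : List A → ℝ}

def ofPFA {Q : Type} [Fintype Q] [DecidableEq Q] {i : Q → ℝ} {δ : Q → A → Q → ℝ} {o : Q → ℝ}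
    (hi : IsDist i) (hδ : ∀ q a, IsDist (δ q a)) (ho : ∀ q, o q ∈ Set.Icc (0 : ℝ) 1)
    (hL : ∀ w, L w = pfaLang i δ o w) : ProbMonoidRecognizer A L :=
  letI := transformationMonoid Q
  { M := Q → Q
    h := wordDist δ
    p := fun f => ∑ q, i q * o (f q)
    h_dist := isDist_wordDist hδ
    h_unit := fun _ => rfl
    h_mul := fun v w m => by rw [wordDist_append]; rfl
    p_mem := fun f =>
      ⟨sum_nonneg fun q _ => mul_nonneg (hi.1 q) (ho (f q)).1,
        (sum_le_sum fun q _ => mul_le_of_le_one_right (hi.1 q) (ho (f q)).2).trans_eq hi.2⟩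
    recog := fun w => (hL w).trans (pfaLang_eq_sum_wordDist (fun q a => (hδ q a).2) i o w) }

lemma exists_pfa (R : ProbMonoidRecognizer A L) :
    ∃ (k : ℕ) (i : Fin k → ℝ) (δ : Fin k → A → Fin k → ℝ) (o : Fin k → ℝ),
      IsDist i ∧ (∀ q a, IsDist (δ q a)) ∧ (∀ q, o q ∈ Set.Icc (0 : ℝ) 1) ∧
      ∀ w, L w = pfaLang i δ o w := by
  let _ := R.fin
  let _ := R.dec
  let _ := R.mon
  have hmul (v w : List A) : R.h (v ++ w) = conv (R.h v) (R.h w) := funext (R.h_mul v w)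
  let e := (Fintype.equivFin R.M).symm
  refine ⟨_, R.h [] ∘ e, fun q a q' => rightMulKernel (fun a => R.h [a]) (e q) a (e q'),
    R.p ∘ e, (R.h_dist []).comp_equiv e, fun q a => ?_, fun q => R.p_mem (e q), fun w => ?_⟩
  · exact ((R.h_dist [a]).map (e q * ·)).comp_equiv e
  · rw [pfaLang_equiv, pfaLang_rightMulKernel hmul, List.nil_append, R.recog]

end ProbMonoidRecognizer

theorem pfa_iff_probMonoidRecognizer_general {A : Type} (L : List A → ℝ) :
    (∃ (k : ℕ) (i : Fin k → ℝ) (δ : Fin k → A → Fin k → ℝ) (o : Fin k → ℝ),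
      IsDist i ∧ (∀ q a, IsDist (δ q a)) ∧ (∀ q, o q ∈ Set.Icc (0 : ℝ) 1) ∧
      ∀ w : List A, L w =
        ∑ q : Fin (w.length + 1) → Fin k,
          i (q 0) *
            (∏ j : Fin w.length, δ (q j.castSucc) (w.get j) (q j.succ)) *
            o (q (Fin.last w.length)))
    ↔ Nonempty (ProbMonoidRecognizer A L) :=
  ⟨fun ⟨_, _, _, _, hi, hδ, ho, hL⟩ => ⟨.ofPFA hi hδ ho hL⟩, fun ⟨R⟩ => R.exists_pfa⟩

/-- A probabilistic language is computed by a probabilistic finite automaton iff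
    it is probabilistically recognized by a finite monoid. -/
theorem pfa_iff_probMonoidRecognizer {A : Type} (L : List A → ℝ)
    (hL : ∀ w, L w ∈ Set.Icc (0 : ℝ) 1) :
    (∃ (k : ℕ) (i : Fin k → ℝ) (δ : Fin k → A → Fin k → ℝ) (o : Fin k → ℝ),
      IsDist i ∧ (∀ q a, IsDist (δ q a)) ∧ (∀ q, o q ∈ Set.Icc (0 : ℝ) 1) ∧
      ∀ w : List A, L w =
        ∑ q : Fin (w.length + 1) → Fin k,
          i (q 0) *
            (∏ j : Fin w.length, δ (q j.castSucc) (w.get j) (q j.succ)) *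
            o (q (Fin.last w.length)))
    ↔ Nonempty (ProbMonoidRecognizer A L) :=
  pfa_iff_probMonoidRecognizer_general L
end

section
/- The quotient of D Σ* by the syntactic congruence of a probabilistic language L is a cancellative convex set: whenever [φ] +_r [ψ] = [φ] +_r [χ] with r ∈ (0,1), then [ψ] = [χ]. -/
/-- A finitely supported probability distribution on an arbitrary type. -/
def IsFinDist {A : Type*} (d : A → ℝ) : Prop :=
  (∀ a, 0 ≤ d a) ∧ (Function.support d).Finite ∧ HasSum d 1

/-- ∑ᵢ φ(vᵢ)·L(x vᵢ y). -/
noncomputable def ctxVal {A : Type*} (L : List A → ℝ) (φ : List A → ℝ) (x y : List A) : ℝ :=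
  ∑' v : List A, φ v * L (x ++ v ++ y)

/-- The syntactic congruence of a probabilistic language L. -/
def SynRel {A : Type*} (L : List A → ℝ) (φ ψ : List A → ℝ) : Prop :=
  ∀ x y : List A, ctxVal L φ x y = ctxVal L ψ x y

/-- Pointwise convex combination of distributions. -/
def mix {A : Type*} (r : ℝ) (d e : A → ℝ) : A → ℝ :=
  fun a => r * d a + (1 - r) * e a

lemma summable_aux {A : Type*} (L : List A → ℝ) (d : List A → ℝ)
    (hd : (Function.support d).Finite) (x y : List A) :
    Summable fun v => d v * L (x ++ v ++ y) :=
  summable_of_finite_support <| hd.subset <| fun v hv => by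
    simp only [Function.mem_support] at hv ⊢
    intro h; simp [h] at hv

lemma ctxVal_mix {A : Type*} (L : List A → ℝ) (r : ℝ) (d e : List A → ℝ)
    (hd : (Function.support d).Finite) (he : (Function.support e).Finite) (x y : List A) :
    ctxVal L (mix r d e) x y = r * ctxVal L d x y + (1 - r) * ctxVal L e x y := by
  unfold ctxVal mix
  rw [← tsum_mul_left, ← tsum_mul_left,
    ← Summable.tsum_add ((summable_aux L d hd x y).mul_left r) ((summable_aux L e he x y).mul_left (1-r))]
  congr 1; ext v; ring

/-- The syntactic quotient D Σ*/≈_L is a cancellative convex set: if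
    [φ] +_r [ψ] = [φ] +_r [χ] with r ∈ (0,1) then [ψ] = [χ]. -/
theorem synQuotient_cancellative {A : Type*} (L : List A → ℝ)
    (r : ℝ) (hr : r ∈ Set.Ioo (0 : ℝ) 1) (φ ψ χ : List A → ℝ)
    (hφ : IsFinDist φ) (hψ : IsFinDist ψ) (hχ : IsFinDist χ)
    (h : SynRel L (mix r φ ψ) (mix r φ χ)) :
    SynRel L ψ χ := by
  intro x y
  have := h x y
  rw [ctxVal_mix L r φ ψ hφ.2.1 hψ.2.1 x y, ctxVal_mix L r φ χ hφ.2.1 hχ.2.1 x y] at this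
  have hr1 : (1 - r) ≠ 0 := by linarith [hr.2]
  have := add_left_cancel this
  exact mul_left_cancel₀ hr1 this
end

section
/- Let L : {a}* → [0,1] be the language L(aⁿ) = 1 − 2^{−n}. The map sending the class of ∑_k r_k a^{n_k} in D{a}*/≈_L to ∑_k r_k · 2^{−n_k} is a well-defined bijection from the syntactic quotient onto the half-open interval (0,1], which is an affine monoid isomorphism when (0,1] carries multiplication of reals and the standard convex structure. -/
/-- The language L(aⁿ) = 1 − 2^{−n} on the one-letter alphabet, with {a}* ≅ ℕ. -/
noncomputable def Lhalf : ℕ → ℝ := fun n => 1 - (1 / 2 : ℝ) ^ n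

/-- The syntactic congruence of a language L : {a}* → [0,1] on distributions
    over ℕ ≅ {a}*. -/
def SynRelN (L : ℕ → ℝ) (φ ψ : ℕ → ℝ) : Prop :=
  ∀ k l : ℕ, (∑' n, φ n * L (k + n + l)) = ∑' n, ψ n * L (k + n + l)

/-- Convolution of distributions on the free monoid (ℕ, +). -/
noncomputable def convN (d e : ℕ → ℝ) : ℕ → ℝ :=
  fun m => ∑' p : ℕ × ℕ, if p.1 + p.2 = m then d p.1 * e p.2 else 0

/-- Expected value E(∑ r_k a^{n_k}) = ∑ r_k 2^{−n_k}. -/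
noncomputable def Eval (φ : ℕ → ℝ) : ℝ := ∑' n, φ n * (1 / 2 : ℝ) ^ n

lemma supp_zero {φ : ℕ → ℝ} (h : (Function.support φ).Finite) :
    ∀ n ∉ h.toFinset, φ n = 0 := by
  intro n hn
  simpa [Set.Finite.mem_toFinset, Function.mem_support, not_not] using hn

lemma summable_findist {φ : ℕ → ℝ} (h : (Function.support φ).Finite)
    (f : ℕ → ℝ) : Summable fun n => φ n * f n :=
  summable_of_ne_finset_zero (s := h.toFinset)
    (fun n hn => by rw [supp_zero h n hn, zero_mul])

lemma eval_eq_sum {φ : ℕ → ℝ} (h : (Function.support φ).Finite) :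
    Eval φ = ∑ n ∈ h.toFinset, φ n * (1 / 2 : ℝ) ^ n :=
  tsum_eq_sum (fun n hn => by rw [supp_zero h n hn, zero_mul])

lemma sum_eq_one {φ : ℕ → ℝ} (hφ : IsFinDist φ) :
    ∑ n ∈ hφ.2.1.toFinset, φ n = 1 := by
  have := hφ.2.2.tsum_eq
  rw [tsum_eq_sum (fun n hn => supp_zero hφ.2.1 n hn)] at this
  exact this

lemma syn_eval {φ : ℕ → ℝ} (hφ : IsFinDist φ) (k l : ℕ) :
    (∑' n, φ n * Lhalf (k + n + l)) = 1 - (1 / 2 : ℝ) ^ (k + l) * Eval φ := by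
  have hs : Summable φ :=
    summable_of_ne_finset_zero (s := hφ.2.1.toFinset) (supp_zero hφ.2.1)
  have hs2 : Summable fun n => φ n * (1 / 2 : ℝ) ^ n := summable_findist hφ.2.1 _
  have h1 : (∑' n, φ n * Lhalf (k + n + l)) =
      ∑' n, (φ n - (1 / 2 : ℝ) ^ (k + l) * (φ n * (1 / 2 : ℝ) ^ n)) := by
    refine tsum_congr fun n => ?_
    simp only [Lhalf]
    rw [show k + n + l = (k + l) + n by ring, pow_add]
    ring
  rw [h1, Summable.tsum_sub hs (hs2.mul_left _), tsum_mul_left, hφ.2.2.tsum_eq]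
  rfl

-- Part 2
lemma eval_mem {φ : ℕ → ℝ} (hφ : IsFinDist φ) : Eval φ ∈ Set.Ioc (0 : ℝ) 1 := by
  obtain ⟨hpos, hfin, hsum⟩ := hφ
  constructor
  · rw [eval_eq_sum hfin]
    have hne : ∃ n, φ n ≠ 0 := by
      by_contra h
      push_neg at h
      have : HasSum φ 0 := by simpa [funext h] using hasSum_zero
      exact one_ne_zero (hsum.unique this)
    obtain ⟨n, hn⟩ := hne
    refine Finset.sum_pos' (fun i _ => mul_nonneg (hpos i) (by positivity)) ⟨n, ?_, ?_⟩
    · simp [Set.Finite.mem_toFinset, Function.mem_support, hn]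
    · have h := lt_of_le_of_ne (hpos n) (Ne.symm hn)
      exact mul_pos h (by positivity)
  · rw [eval_eq_sum hfin]
    calc ∑ n ∈ hfin.toFinset, φ n * (1 / 2 : ℝ) ^ n
        ≤ ∑ n ∈ hfin.toFinset, φ n := by
          refine Finset.sum_le_sum fun n _ => ?_
          have h1 : (1 / 2 : ℝ) ^ n ≤ 1 :=
            pow_le_one₀ (by norm_num) (by norm_num)
          nlinarith [hpos n]
      _ = 1 := sum_eq_one ⟨hpos, hfin, hsum⟩

-- Part 4
lemma eval_delta : Eval (fun n => if n = 0 then 1 else 0) = 1 := by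
  have h : (fun n : ℕ => (if n = 0 then (1 : ℝ) else 0) * (1 / 2 : ℝ) ^ n) =
      fun n => if n = 0 then (1 : ℝ) else 0 := by
    funext n
    by_cases hn : n = 0 <;> simp [hn]
  rw [Eval, h]
  exact tsum_eq_single 0 (fun n hn => by simp [hn]) |>.trans (by simp)

-- Part 3
lemma eval_surj {x : ℝ} (hx : x ∈ Set.Ioc (0 : ℝ) 1) :
    ∃ φ : ℕ → ℝ, IsFinDist φ ∧ Eval φ = x := by
  obtain ⟨hx0, hx1⟩ := hx
  obtain ⟨n, hn⟩ := exists_pow_lt_of_lt_one hx0 (by norm_num : (1 / 2 : ℝ) < 1)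
  have hn0 : n ≠ 0 := by
    intro h; rw [h, pow_zero] at hn; linarith
  set q : ℝ := (1 / 2 : ℝ) ^ n with hq
  have hq0 : 0 < q := by positivity
  have hq1 : q < 1 := lt_of_lt_of_le hn hx1
  set r : ℝ := (x - q) / (1 - q) with hr
  have hr0 : 0 ≤ r := div_nonneg (by linarith) (by linarith)
  have hr1 : r ≤ 1 := by
    rw [hr, div_le_one (by linarith)]; linarith
  refine ⟨fun m => if m = 0 then r else if m = n then 1 - r else 0, ⟨?_, ?_, ?_⟩, ?_⟩
  · intro m
    by_cases h0 : m = 0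
    · simp [h0, hr0]
    · by_cases h1 : m = n <;> simp [h0, h1, hn0] <;> linarith
  · apply Set.Finite.subset ((Set.finite_singleton n).insert 0)
    intro m hm
    simp only [Function.mem_support] at hm
    by_cases h0 : m = 0
    · simp [h0]
    · by_cases h1 : m = n
      · simp [h1]
      · simp [h0, h1] at hm
  · have h1 : HasSum (fun m : ℕ => if m = 0 then r else 0) r := hasSum_ite_eq 0 r
    have h2 : HasSum (fun m : ℕ => if m = n then 1 - r else 0) (1 - r) :=
      hasSum_ite_eq n (1 - r)
    have := h1.add h2
    rw [show r + (1 - r) = 1 by ring] at this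
    refine HasSum.congr_fun this fun m => ?_
    by_cases h0 : m = 0
    · simp [h0, hn0, Ne.symm hn0]
    · by_cases hmn : m = n <;> simp [h0, hmn, hn0]
  · have h1 : HasSum (fun m : ℕ => if m = 0 then r else 0) r := hasSum_ite_eq 0 r
    have h2 : HasSum (fun m : ℕ => if m = n then (1 - r) * q else 0) ((1 - r) * q) :=
      hasSum_ite_eq n _
    have h3 := h1.add h2
    have h4 : HasSum (fun m : ℕ =>
        (if m = 0 then r else if m = n then 1 - r else 0) * (1 / 2 : ℝ) ^ m)
        (r + (1 - r) * q) := by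
      refine HasSum.congr_fun h3 fun m => ?_
      by_cases h0 : m = 0
      · simp [h0, hn0, Ne.symm hn0]
      · by_cases hmn : m = n
        · simp [h0, hmn, hq, hn0]
        · simp [h0, hmn]
    rw [Eval, h4.tsum_eq, hr]
    have h1q : (1 : ℝ) - q ≠ 0 := by linarith
    field_simp
    ring

lemma eval_conv {φ ψ : ℕ → ℝ} (hφ : IsFinDist φ) (hψ : IsFinDist ψ) :
    Eval (convN φ ψ) = Eval φ * Eval ψ := by
  set S := hφ.2.1.toFinset with hS
  set T := hψ.2.1.toFinset with hT
  set P : Finset (ℕ × ℕ) := S ×ˢ T with hP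
  set U : Finset ℕ := P.image (fun p => p.1 + p.2) with hU
  have hzero : ∀ p : ℕ × ℕ, p ∉ P → ∀ m : ℕ,
      (if p.1 + p.2 = m then φ p.1 * ψ p.2 else 0) = 0 := by
    intro p hp m
    have h0 : φ p.1 * ψ p.2 = 0 := by
      rw [hP, Finset.mem_product, not_and_or] at hp
      rcases hp with h | h
      · rw [supp_zero hφ.2.1 _ h, zero_mul]
      · rw [supp_zero hψ.2.1 _ h, mul_zero]
    rw [h0, ite_self]
  have hconv : ∀ m, convN φ ψ m =
      ∑ p ∈ P, if p.1 + p.2 = m then φ p.1 * ψ p.2 else 0 := fun m =>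
    tsum_eq_sum (fun p hp => hzero p hp m)
  have hconv0 : ∀ m ∉ U, convN φ ψ m = 0 := by
    intro m hm
    rw [hconv m]
    refine Finset.sum_eq_zero fun p hp => ?_
    rw [if_neg]
    intro h
    exact hm (Finset.mem_image.mpr ⟨p, hp, h⟩)
  have step1 : Eval (convN φ ψ) = ∑ m ∈ U, convN φ ψ m * (1 / 2 : ℝ) ^ m :=
    tsum_eq_sum (fun m hm => by rw [hconv0 m hm, zero_mul])
  rw [step1]
  have step2 : ∑ m ∈ U, convN φ ψ m * (1 / 2 : ℝ) ^ m =
      ∑ p ∈ P, φ p.1 * ψ p.2 * ((1 / 2 : ℝ) ^ p.1 * (1 / 2 : ℝ) ^ p.2) := by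
    have : ∀ m ∈ U, convN φ ψ m * (1 / 2 : ℝ) ^ m =
        ∑ p ∈ P, if p.1 + p.2 = m then φ p.1 * ψ p.2 * (1 / 2 : ℝ) ^ m else 0 := by
      intro m _
      rw [hconv m, Finset.sum_mul]
      exact Finset.sum_congr rfl fun p _ => by rw [ite_mul, zero_mul]
    rw [Finset.sum_congr rfl this, Finset.sum_comm]
    refine Finset.sum_congr rfl fun p hp => ?_
    have hmem : p.1 + p.2 ∈ U := Finset.mem_image.mpr ⟨p, hp, rfl⟩
    rw [show (∑ m ∈ U, if p.1 + p.2 = m then φ p.1 * ψ p.2 * (1 / 2 : ℝ) ^ m else 0) =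
        if p.1 + p.2 ∈ U then φ p.1 * ψ p.2 * (1 / 2 : ℝ) ^ (p.1 + p.2) else 0 from
        Finset.sum_ite_eq U (p.1 + p.2) (fun m => φ p.1 * ψ p.2 * (1 / 2 : ℝ) ^ m),
      if_pos hmem, pow_add]
  rw [step2, eval_eq_sum hφ.2.1, eval_eq_sum hψ.2.1, Finset.sum_mul_sum, hP,
    Finset.sum_product]
  exact Finset.sum_congr rfl fun i _ => Finset.sum_congr rfl fun j _ => by ring

lemma eval_mix (r : ℝ) {φ ψ : ℕ → ℝ} (hφ : IsFinDist φ) (hψ : IsFinDist ψ) :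
    Eval (mix r φ ψ) = r * Eval φ + (1 - r) * Eval ψ := by
  have hs1 : Summable fun n => φ n * (1 / 2 : ℝ) ^ n := summable_findist hφ.2.1 _
  have hs2 : Summable fun n => ψ n * (1 / 2 : ℝ) ^ n := summable_findist hψ.2.1 _
  have h : (fun n => mix r φ ψ n * (1 / 2 : ℝ) ^ n) =
      fun n => r * (φ n * (1 / 2 : ℝ) ^ n) + (1 - r) * (ψ n * (1 / 2 : ℝ) ^ n) := by
    funext n; simp only [mix]; ring
  rw [Eval, h, Summable.tsum_add (hs1.mul_left r) (hs2.mul_left (1 - r)), tsum_mul_left,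
    tsum_mul_left]
  rfl

/-- The map [∑ r_k a^{n_k}] ↦ ∑ r_k 2^{−n_k} is a well-defined bijection from
    the syntactic quotient D{a}*/≈_L onto (0,1], and an affine monoid
    isomorphism for multiplication of reals and the standard convex structure. -/
theorem synMonoid_iso_Ioc :
    (∀ φ ψ : ℕ → ℝ, IsFinDist φ → IsFinDist ψ →
      (SynRelN Lhalf φ ψ ↔ Eval φ = Eval ψ)) ∧
    (∀ φ : ℕ → ℝ, IsFinDist φ → Eval φ ∈ Set.Ioc (0 : ℝ) 1) ∧
    (∀ x ∈ Set.Ioc (0 : ℝ) 1, ∃ φ : ℕ → ℝ, IsFinDist φ ∧ Eval φ = x) ∧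
    (Eval (fun n => if n = 0 then 1 else 0) = 1) ∧
    (∀ φ ψ : ℕ → ℝ, IsFinDist φ → IsFinDist ψ →
      Eval (convN φ ψ) = Eval φ * Eval ψ) ∧
    (∀ r ∈ Set.Icc (0 : ℝ) 1, ∀ φ ψ : ℕ → ℝ, IsFinDist φ → IsFinDist ψ →
      Eval (mix r φ ψ) = r * Eval φ + (1 - r) * Eval ψ) := by
  refine ⟨?_, fun φ hφ => eval_mem hφ, fun x hx => eval_surj hx, eval_delta,
    fun φ ψ hφ hψ => eval_conv hφ hψ, fun r _ φ ψ hφ hψ => eval_mix r hφ hψ⟩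
  intro φ ψ hφ hψ
  constructor
  · intro h
    have h0 := h 0 0
    rw [syn_eval hφ 0 0, syn_eval hψ 0 0] at h0
    have hp : (1 / 2 : ℝ) ^ (0 + 0) = 1 := by norm_num
    rw [hp] at h0
    linarith
  · intro h k l
    rw [syn_eval hφ k l, syn_eval hψ k l, h]
end

section
/- A probabilistic language L : Σ* → [0,1] is commutative (i.e., invariant under all permutations of the letters of the input word) if and only if its syntactic convex monoid D Σ*/≈_L is commutative. -/
/-- Multiplication of distributions on the free monoid Σ*. -/
noncomputable def wconv {A : Type*} [DecidableEq A] (d e : List A → ℝ) : List A → ℝ :=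
  fun w => ∑' p : List A × List A, if p.1 ++ p.2 = w then d p.1 * e p.2 else 0
/-! The product `[φ][ψ]` in a context `x _ y` is the `φ ⊗ ψ`-average of `L (x u v y)`, so a
commutative `L` makes the quotient commutative. Conversely, testing commutativity on the Dirac
distributions at two letters `a`, `b` shows that `L` is invariant under adjacent transpositions,
and these generate all permutations. -/

open Function

lemma tsum_fiber_mul_eq_tsum {α β : Type*} [DecidableEq β] (m : α → β) {f : α → ℝ}
    (hf : (support f).Finite) (g : β → ℝ) :
    ∑' b, (∑' a, if m a = b then f a else 0) * g b = ∑' a, f a * g (m a) := by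
  set s := hf.toFinset
  have hfs : ∀ a ∉ s, f a = 0 := fun a ha => by simpa [s] using ha
  have hfiber : ∀ b, ∑' a, (if m a = b then f a else 0) = ∑ a ∈ s with m a = b, f a := by
    intro b
    rw [Finset.sum_filter]
    exact tsum_eq_sum fun a ha => by simp [hfs a ha]
  calc ∑' b, (∑' a, if m a = b then f a else 0) * g b
        = ∑ b ∈ s.image m, (∑ a ∈ s with m a = b, f a) * g b := by
          simp_rw [hfiber]
          refine tsum_eq_sum fun b hb => ?_
          have hempty : ∀ a ∈ s, m a ≠ b := fun a ha hab => hb (hab ▸ Finset.mem_image_of_mem m ha)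
          rw [Finset.filter_false_of_mem hempty, Finset.sum_empty, zero_mul]
    _ = ∑ a ∈ s, f a * g (m a) := by
          rw [← Finset.sum_fiberwise_of_maps_to (fun _ => Finset.mem_image_of_mem m)
            (fun a => f a * g (m a))]
          refine Finset.sum_congr rfl fun b _ => ?_
          rw [Finset.sum_mul]
          exact Finset.sum_congr rfl fun a ha => by rw [(Finset.mem_filter.1 ha).2]
    _ = ∑' a, f a * g (m a) := (tsum_eq_sum fun a ha => by simp [hfs a ha]).symm

lemma ctxVal_wconv {A : Type*} [DecidableEq A] (L : List A → ℝ) {φ ψ : List A → ℝ}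
    (hφ : (support φ).Finite) (hψ : (support ψ).Finite) (x y : List A) :
    ctxVal L (wconv φ ψ) x y =
      ∑' p : List A × List A, φ p.1 * ψ p.2 * L (x ++ (p.1 ++ p.2) ++ y) := by
  refine tsum_fiber_mul_eq_tsum (fun p : List A × List A => p.1 ++ p.2) ?_ _
  refine (hφ.prod hψ).subset fun p hp => ?_
  simp only [mem_support, ne_eq, mul_eq_zero, not_or] at hp
  exact ⟨hp.1, hp.2⟩

lemma isFinDist_single {B : Type*} [DecidableEq B] (u : B) : IsFinDist (Pi.single u (1 : ℝ)) :=
  ⟨fun b => by by_cases h : b = u <;> simp [h],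
    (Set.finite_singleton u).subset Pi.support_single_subset, hasSum_pi_single u 1⟩

lemma ctxVal_wconv_single {A : Type*} [DecidableEq A] (L : List A → ℝ) (u v x y : List A) :
    ctxVal L (wconv (Pi.single u 1) (Pi.single v 1)) x y = L (x ++ (u ++ v) ++ y) := by
  rw [ctxVal_wconv L (isFinDist_single u).2.1 (isFinDist_single v).2.1, tsum_eq_single (u, v)]
  · simp
  · rintro ⟨u', v'⟩ h
    by_cases hu : u' = u <;> by_cases hv : v' = v <;> simp_all

lemma synRel_wconv_comm_of_perm {A : Type*} [DecidableEq A] {L : List A → ℝ}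
    (hL : ∀ v w : List A, v.Perm w → L v = L w) {φ ψ : List A → ℝ}
    (hφ : (support φ).Finite) (hψ : (support ψ).Finite) :
    SynRel L (wconv φ ψ) (wconv ψ φ) := by
  intro x y
  rw [ctxVal_wconv L hφ hψ, ctxVal_wconv L hψ hφ, ← (Equiv.prodComm _ _).tsum_eq]
  refine tsum_congr fun p => ?_
  rw [Equiv.prodComm_apply, Prod.fst_swap, Prod.snd_swap, mul_comm (φ p.2),
    hL _ _ ((List.perm_append_comm.append_left x).append_right y)]

lemma apply_append_eq_of_perm {A B : Type*} {f : List A → B}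
    (hf : ∀ x y : List A, ∀ a b : A, f (x ++ a :: b :: y) = f (x ++ b :: a :: y))
    {v w : List A} (h : v.Perm w) (x y : List A) : f (x ++ v ++ y) = f (x ++ w ++ y) := by
  induction h generalizing x with
  | nil => rfl
  | cons a _ ih => simpa using ih (x ++ [a])
  | swap a b l => simpa using hf x (l ++ y) b a
  | trans _ _ ih₁ ih₂ => exact (ih₁ x).trans (ih₂ x)

/-- A probabilistic language is commutative (invariant under permutations of the
    letters of the input) iff its syntactic convex monoid D Σ*/≈_L is
    commutative. -/
theorem commutative_lang_iff_commutative_synMonoid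
    {A : Type*} [DecidableEq A] (L : List A → ℝ) :
    (∀ v w : List A, v.Perm w → L v = L w) ↔
    (∀ φ ψ : List A → ℝ, IsFinDist φ → IsFinDist ψ →
      SynRel L (wconv φ ψ) (wconv ψ φ)) := by
  refine ⟨fun hL φ ψ hφ hψ => synRel_wconv_comm_of_perm hL hφ.2.1 hψ.2.1, fun H v w hvw => ?_⟩
  have hswap : ∀ x y : List A, ∀ a b : A, L (x ++ a :: b :: y) = L (x ++ b :: a :: y) := by
    intro x y a b
    simpa [ctxVal_wconv_single] using H _ _ (isFinDist_single [a]) (isFinDist_single [b]) x y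
  simpa using apply_append_eq_of_perm hswap hvw [] []
end

section
/- Let T be a commutative monad on Set and let N be a T-monoid (a T-algebra with a monoid structure whose multiplication is a T-bimorphism). Then the free extension h# : TM → N of any monoid morphism h : M → N (M an ordinary monoid, TM carrying the induced monoid structure via the double strength) is a monoid morphism. -/
/-- A monad on Set, given concretely. -/
structure SetMonad where
  T : Type → Type
  map : ∀ {X Y : Type}, (X → Y) → T X → T Y
  η : ∀ {X : Type}, X → T X
  μ : ∀ {X : Type}, T (T X) → T X
  map_id : ∀ {X : Type} (t : T X), map id t = t
  map_comp : ∀ {X Y Z : Type} (f : X → Y) (g : Y → Z) (t : T X),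
    map (g ∘ f) t = map g (map f t)
  η_nat : ∀ {X Y : Type} (f : X → Y) (x : X), map f (η x) = η (f x)
  μ_nat : ∀ {X Y : Type} (f : X → Y) (t : T (T X)), map f (μ t) = μ (map (map f) t)
  μ_η : ∀ {X : Type} (t : T X), μ (η t) = t
  μ_map_η : ∀ {X : Type} (t : T X), μ (map η t) = t
  μ_assoc : ∀ {X : Type} (t : T (T (T X))), μ (map μ t) = μ (μ t)

/-- The double strength rs ; T(ls) ; μ. -/
def SetMonad.dstr (S : SetMonad) {X Y : Type} (t : S.T X) (s : S.T Y) : S.T (X × Y) :=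
  S.μ (S.map (fun x => S.map (fun y => (x, y)) s) t)

/-- The other double strength ls ; T(rs) ; μ. -/
def SetMonad.dstr' (S : SetMonad) {X Y : Type} (t : S.T X) (s : S.T Y) : S.T (X × Y) :=
  S.μ (S.map (fun y => S.map (fun x => (x, y)) t) s)

/-- The induced multiplication on T M for a monoid M. -/
def SetMonad.monMul (S : SetMonad) {M : Type} [Monoid M] (t s : S.T M) : S.T M :=
  S.map (fun p : M × M => p.1 * p.2) (S.dstr t s)


theorem SetMonad.dstr_nat (S : SetMonad) {X Y X' Y' : Type}
    (f : X → X') (g : Y → Y') (t : S.T X) (s : S.T Y) :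
    S.map (Prod.map f g) (S.dstr t s) = S.dstr (S.map f t) (S.map g s) := by
  unfold SetMonad.dstr
  rw [S.μ_nat, ← S.map_comp, ← S.map_comp]
  congr 1
  refine congrFun (congrArg S.map ?_) t
  funext x
  simp only [Function.comp_apply, ← S.map_comp]
  rfl

/-- For a commutative monad T and a T-monoid N (a T-algebra with a monoid
    structure whose multiplication is a T-bimorphism), the free extension
    h# = map h ; n : TM → N of any monoid morphism h : M → N is again a monoid
    morphism, where TM carries the induced monoid structure. -/
theorem freeExtension_monoidMorphism (S : SetMonad)
    (hcomm : ∀ {X Y : Type} (t : S.T X) (s : S.T Y), S.dstr t s = S.dstr' t s)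
    (M N : Type) [Monoid M] [Monoid N]
    (n : S.T N → N)
    (halg_unit : ∀ x : N, n (S.η x) = x)
    (halg_mul : ∀ t : S.T (S.T N), n (S.μ t) = n (S.map n t))
    (hbimorph : ∀ t s : S.T N,
      n (S.map (fun p : N × N => p.1 * p.2) (S.dstr t s)) = n t * n s)
    (h : M → N) (h_one : h 1 = 1) (h_mul : ∀ a b : M, h (a * b) = h a * h b) :
    n (S.map h (S.η (1 : M))) = 1 ∧
    (∀ t s : S.T M, n (S.map h (S.monMul t s)) = n (S.map h t) * n (S.map h s)) := by
  constructor
  · rw [S.η_nat, halg_unit, h_one]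
  · intro t s
    have key : S.map h (S.monMul t s)
        = S.map (fun p : N × N => p.1 * p.2) (S.dstr (S.map h t) (S.map h s)) := by
      unfold SetMonad.monMul
      rw [← S.dstr_nat, ← S.map_comp, ← S.map_comp]
      congr 1
      funext p
      exact (h_mul p.1 p.2)
    rw [key, hbimorph]
end

section
/- Let T be a finitary monad on Set whose finitely generated algebras are closed under finite products — equivalently, such that for every finite set X the T-algebra (TX)^X is finitely generated. If A and B are T-algebras admitting surjective T-algebra morphisms from free algebras TX, TY on finite sets, then A × B admits a surjective T-algebra morphism from a free algebra TK on some finite set K. -/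
/-- a : T A → A is a T-algebra structure. -/
def SetMonad.IsAlg (S : SetMonad) {A : Type} (a : S.T A → A) : Prop :=
  (∀ x : A, a (S.η x) = x) ∧ ∀ t : S.T (S.T A), a (S.μ t) = a (S.map a t)

/-- f is a T-algebra morphism from (A,a) to (B,b). -/
def SetMonad.IsAlgHom (S : SetMonad) {A B : Type}
    (a : S.T A → A) (b : S.T B → B) (f : A → B) : Prop :=
  ∀ t : S.T A, f (a t) = b (S.map f t)

/-- (A,a) is a finitely generated T-algebra: there is a surjective T-algebra
    morphism from a free algebra on a finite set. -/
def SetMonad.FinGen (S : SetMonad) {A : Type} (a : S.T A → A) : Prop :=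
  ∃ (k : ℕ) (q : S.T (Fin k) → A),
    S.IsAlgHom S.μ a q ∧ Function.Surjective q

/-- The product T-algebra structure on A × B. -/
def SetMonad.prodAlg (S : SetMonad) {A B : Type}
    (a : S.T A → A) (b : S.T B → B) : S.T (A × B) → A × B :=
  fun t => (a (S.map Prod.fst t), b (S.map Prod.snd t))

/-- The power T-algebra (T X)^X for X = Fin k: the product of |X| copies of the
    free algebra T X. -/
def SetMonad.powAlg (S : SetMonad) (k : ℕ) :
    S.T (Fin k → S.T (Fin k)) → (Fin k → S.T (Fin k)) :=
  fun t i => S.μ (S.map (fun g => g i) t)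

/-!
Write `A` and `B` as quotients of free algebras `T(Fin m)` and `T(Fin n)`. Once `A` is nonempty,
`T(Fin m)` is a retract of `T(Fin K)` for every `K ≥ m` (send the extra generators to any element),
so `A` is a quotient of `T(Fin K)` for all large `K`, and likewise `B`. For one such `K ≥ 2`, reading
off two different coordinates exhibits `A × B` as a quotient of `(T K)^K`, which is finitely
generated by hypothesis. If `A` or `B` is empty, so is the free algebra presenting it, and that
algebra presents the empty product as well.
-/

namespace SetMonad

variable (S : SetMonad)

def bind {X Y : Type} (f : X → S.T Y) : S.T X → S.T Y :=
  fun u => S.μ (S.map f u)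

variable {S}

lemma IsAlgHom.comp {A B C : Type} {a : S.T A → A} {b : S.T B → B} {c : S.T C → C}
    {f : A → B} {g : B → C} (hg : S.IsAlgHom b c g) (hf : S.IsAlgHom a b f) :
    S.IsAlgHom a c (g ∘ f) := by
  intro t
  rw [S.map_comp, Function.comp_apply, hf, hg]

lemma IsAlgHom.prodMk {C A B : Type} {c : S.T C → C} {a : S.T A → A} {b : S.T B → B}
    {f : C → A} {g : C → B} (hf : S.IsAlgHom c a f) (hg : S.IsAlgHom c b g) :
    S.IsAlgHom c (S.prodAlg a b) (fun x => (f x, g x)) := by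
  intro t
  simp only [prodAlg, ← S.map_comp]
  exact Prod.ext (hf t) (hg t)

lemma isAlgHom_eval (k : ℕ) (i : Fin k) : S.IsAlgHom (S.powAlg k) S.μ (fun h => h i) :=
  fun _ => rfl

lemma isAlgHom_bind {X Y : Type} (f : X → S.T Y) : S.IsAlgHom S.μ S.μ (S.bind f) := by
  intro t
  simp only [bind]
  rw [S.μ_nat, ← S.μ_assoc, ← S.map_comp]
  rfl

lemma bind_map_of_forall_eq_η {X Y : Type} {ι : X → Y} {f : Y → S.T X}
    (hf : ∀ x, f (ι x) = S.η x) (t : S.T X) : S.bind f (S.map ι t) = t := by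
  have hfι : f ∘ ι = S.η := funext hf
  rw [bind, ← S.map_comp, hfι, S.μ_map_η]

lemma FinGen.of_surjective {A B : Type} {a : S.T A → A} {b : S.T B → B} (ha : S.FinGen a)
    {f : A → B} (hf : S.IsAlgHom a b f) (hsurj : Function.Surjective f) : S.FinGen b := by
  obtain ⟨k, q, hq, hqsurj⟩ := ha
  exact ⟨k, f ∘ q, hf.comp hq, hsurj.comp hqsurj⟩

lemma FinGen.of_isEmpty {A C : Type} {a : S.T A → A} (ha : S.FinGen a) [IsEmpty A]
    (c : S.T C → C) (f : C → A) : S.FinGen c := by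
  obtain ⟨k, q, -, -⟩ := ha
  exact ⟨k, fun t => isEmptyElim (q t), fun t => isEmptyElim (q (S.μ t)),
    fun x => isEmptyElim (f x)⟩

lemma FinGen.exists_surjective_of_le {A : Type} {a : S.T A → A} (ha : S.FinGen a)
    [Nonempty A] : ∃ m, ∀ K, m ≤ K →
      ∃ f : S.T (Fin K) → A, S.IsAlgHom S.μ a f ∧ Function.Surjective f := by
  obtain ⟨m, q, hq, hqsurj⟩ := ha
  obtain ⟨t₀, -⟩ := hqsurj (Classical.arbitrary A)
  refine ⟨m, fun K hmK => ?_⟩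
  let retraction : Fin K → S.T (Fin m) :=
    fun z => if h : z.val < m then S.η ⟨z.val, h⟩ else t₀
  have hretraction : ∀ j, retraction (Fin.castLE hmK j) = S.η j := fun j => dif_pos j.isLt
  refine ⟨q ∘ S.bind retraction, hq.comp (isAlgHom_bind retraction), hqsurj.comp ?_⟩
  exact fun t => ⟨S.map (Fin.castLE hmK) t, bind_map_of_forall_eq_η hretraction t⟩

lemma surjective_powAlg_prodMk {K : ℕ} {A B : Type} {f : S.T (Fin K) → A}
    {g : S.T (Fin K) → B} (hf : Function.Surjective f) (hg : Function.Surjective g)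
    {i j : Fin K} (hij : i ≠ j) :
    Function.Surjective (fun h : Fin K → S.T (Fin K) => (f (h i), g (h j))) := by
  rintro ⟨x, y⟩
  obtain ⟨u, rfl⟩ := hf x
  obtain ⟨v, rfl⟩ := hg y
  refine ⟨fun l => if l = i then u else v, ?_⟩
  simp [hij.symm]

end SetMonad

open SetMonad in
theorem finGen_closed_under_products_general (S : SetMonad)
    (hpow : ∀ k : ℕ, S.FinGen (S.powAlg k))
    {A B : Type} (a : S.T A → A) (b : S.T B → B)
    (hA : S.FinGen a) (hB : S.FinGen b) :
    S.FinGen (S.prodAlg a b) := by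
  cases isEmpty_or_nonempty A
  · exact hA.of_isEmpty _ Prod.fst
  cases isEmpty_or_nonempty B
  · exact hB.of_isEmpty _ Prod.snd
  obtain ⟨m, hm⟩ := hA.exists_surjective_of_le
  obtain ⟨n, hn⟩ := hB.exists_surjective_of_le
  obtain ⟨f, hf, hfsurj⟩ := hm (m + n + 2) (by omega)
  obtain ⟨g, hg, hgsurj⟩ := hn (m + n + 2) (by omega)
  exact (hpow (m + n + 2)).of_surjective
    ((hf.comp (isAlgHom_eval _ 0)).prodMk (hg.comp (isAlgHom_eval _ 1)))
    (surjective_powAlg_prodMk hfsurj hgsurj Fin.zero_ne_one)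

/-- If for every finite set X the T-algebra (T X)^X is finitely generated, then
    finitely generated T-algebras are closed under binary products: whenever A
    and B admit surjective T-algebra morphisms from free algebras on finite
    sets, so does A × B. -/
theorem finGen_closed_under_products (S : SetMonad)
    (hpow : ∀ k : ℕ, S.FinGen (S.powAlg k))
    {A B : Type} (a : S.T A → A) (b : S.T B → B)
    (ha : S.IsAlg a) (hb : S.IsAlg b)
    (hA : S.FinGen a) (hB : S.FinGen b) :
    S.FinGen (S.prodAlg a b) :=
  finGen_closed_under_products_general S hpow a b hA hB
end

section
/- Let T be an affine commutative monad on Set (T1 ≅ 1). Then for all sets X,Y the double strength followed by the pairing of the two projections is the identity: π_{X,Y} ; ⟨T p₁, T p₂⟩ = id on TX × TY. Consequently, for finite X, the canonical T-algebra morphism ξ : T(X → X) → (TX)^X extending f ↦ f ; η_X is split surjective. -/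
/-- The canonical T-algebra morphism ξ : T(X → X) → (T X)^X extending
    f ↦ f ; η. -/
def SetMonad.xiMap (S : SetMonad) {X : Type} (d : S.T (X → X)) : X → S.T X :=
  fun x => S.map (fun f => f x) d

open scoped Classical

section Aux
variable (S : SetMonad)

lemma map_const (haffine : ∀ t : S.T PUnit, t = S.η PUnit.unit)
    {X Y : Type} (s : S.T Y) (x : X) : S.map (fun _ => x) s = S.η x := by
  have h1 : (fun _ : Y => x) = (fun _ : PUnit => x) ∘ (fun _ => PUnit.unit) := rfl
  rw [h1, S.map_comp, haffine (S.map (fun _ => PUnit.unit) s), S.η_nat]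

lemma map_fst_dstr (haffine : ∀ t : S.T PUnit, t = S.η PUnit.unit)
    {X Y : Type} (t : S.T X) (s : S.T Y) : S.map Prod.fst (S.dstr t s) = t := by
  unfold SetMonad.dstr
  rw [S.μ_nat, ← S.map_comp]
  have : (S.map Prod.fst ∘ fun x => S.map (fun y => (x, y)) s) = fun x : X => S.η x := by
    funext x
    show S.map Prod.fst (S.map (fun y => (x, y)) s) = S.η x
    rw [← S.map_comp]
    exact map_const S haffine s x
  rw [this]
  exact S.μ_map_η t

lemma map_snd_dstr' (haffine : ∀ t : S.T PUnit, t = S.η PUnit.unit)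
    {X Y : Type} (t : S.T X) (s : S.T Y) : S.map Prod.snd (S.dstr' t s) = s := by
  unfold SetMonad.dstr'
  rw [S.μ_nat, ← S.map_comp]
  have : (S.map Prod.snd ∘ fun y => S.map (fun x => (x, y)) t) = fun y : Y => S.η y := by
    funext y
    show S.map Prod.snd (S.map (fun x => (x, y)) t) = S.η y
    rw [← S.map_comp]
    exact map_const S haffine t y
  rw [this]
  exact S.μ_map_η s

noncomputable def combineList {X : Type} (g : X → S.T X) : List X → S.T (X → X)
  | [] => S.η id
  | a :: l => S.map (fun p y => if y = a then p.1 else p.2 y)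
      (S.dstr (g a) (combineList g l))

lemma xi_combine (hcomm : ∀ {X Y : Type} (t : S.T X) (s : S.T Y), S.dstr t s = S.dstr' t s)
    (haffine : ∀ t : S.T PUnit, t = S.η PUnit.unit)
    {X : Type} (g : X → S.T X) (L : List X) (x : X) (hx : x ∈ L) :
    S.xiMap (combineList S g L) x = g x := by
  induction L with
  | nil => cases hx
  | cons a l ih =>
    simp only [combineList, SetMonad.xiMap]
    rw [← S.map_comp]
    by_cases h : x = a
    · subst h
      have : ((fun f : X → X => f x) ∘ fun p (y : X) => if y = x then p.1 else p.2 y)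
          = (Prod.fst : X × (X → X) → X) := by
        funext p; simp
      rw [this, map_fst_dstr S haffine]
    · have : ((fun f : X → X => f x) ∘ fun p (y : X) => if y = a then p.1 else p.2 y)
          = (fun f : X → X => f x) ∘ (Prod.snd : X × (X → X) → X → X) := by
        funext p; simp [h]
      rw [this, S.map_comp, hcomm, map_snd_dstr' S haffine]
      rcases List.mem_cons.mp hx with h' | h'
      · exact absurd h' h
      · exact ih h'

end Aux

/-- For an affine commutative monad T (T1 ≅ 1): the double strength followed by
    the pairing of the projections is the identity on TX × TY; consequently, for
    every finite X the canonical T-algebra morphism ξ : T(X → X) → (T X)^X is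
    split surjective. -/
theorem affine_dstr_section (S : SetMonad)
    (hcomm : ∀ {X Y : Type} (t : S.T X) (s : S.T Y), S.dstr t s = S.dstr' t s)
    (haffine : ∀ t : S.T PUnit, t = S.η PUnit.unit) :
    (∀ (X Y : Type) (t : S.T X) (s : S.T Y),
      S.map Prod.fst (S.dstr t s) = t ∧ S.map Prod.snd (S.dstr t s) = s) ∧
    (∀ (X : Type) [Fintype X],
      ∃ l : (X → S.T X) → S.T (X → X), ∀ g : X → S.T X, S.xiMap (l g) = g) := by
  constructor
  · intro X Y t s
    exact ⟨map_fst_dstr S haffine t s, by rw [hcomm]; exact map_snd_dstr' S haffine t s⟩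
  · intro X _
    refine ⟨fun g => combineList S g Finset.univ.toList, fun g => ?_⟩
    funext x
    exact xi_combine S hcomm haffine g _ x (by simp)
end

section
/- An S-weighted language L : Σ* → S is computed by some weighted finite automaton over the semiring S if and only if there exists a finite monoid M, a map h : Σ* → (M → S) that is a monoid morphism into the monoid S^M with convolution product (u·v)(m) = ∑_{m = m₁m₂} u(m₁)v(m₂) and unit δ_e, with each h(w) finitely supported, and a map p : M → S such that L(w) = ∑_{m∈M} h(w)(m)·p(m). -/
/-
A weighted automaton is a linear representation `L w = ι ᵥ* μ(a₁)⋯μ(aₙ) ⬝ᵥ o`. A recognizer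
`(M, h, p)` yields one on the states `M`: the right regular representation of the convolution
algebra `S^M`, started at `δ_e` and read out by `p`.

Conversely, first add a start state absorbing `ι` into the transitions; since `S` need not be
commutative, `ι` has to stand to the left of `h w m` and cannot be moved into `p`. Every
transition matrix is then an `S`-combination of matrix units, and these are images of the finite
monoid of partial bijections of the states, which acts by `0/1` matrices with central entries.
So the product of those combinations in the monoid algebra maps onto `μ(w)`, and the output
`p m` is the start row of `m` applied to `o`.
-/

open Matrix

/-- Effectful recognition of an S-weighted language by a finite monoid:
    a map h : Σ* → (M → S) that is a monoid morphism into S^M with the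
    convolution product and unit δ_e, together with an output map p : M → S
    such that L(w) = ∑_m h(w)(m)·p(m). -/
structure WeightedMonoidRecognizer (A S : Type) [Semiring S] (L : List A → S) where
  M : Type
  [fin : Fintype M]
  [dec : DecidableEq M]
  [mon : Monoid M]
  h : List A → M → S
  p : M → S
  h_unit : ∀ m, h [] m = if m = 1 then 1 else 0
  h_mul : ∀ v w m, h (v ++ w) m =
    ∑ x : M × M, if x.1 * x.2 = m then h v x.1 * h w x.2 else 0
  recog : ∀ w, L w = ∑ m, h w m * p m

attribute [local instance] WeightedMonoidRecognizer.fin WeightedMonoidRecognizer.dec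
  WeightedMonoidRecognizer.mon

section
variable {A S : Type} [Semiring S]

section LinearRepresentation
variable {Q : Type} [Fintype Q] [DecidableEq Q]

theorem sum_paths_eq_vecMul_prod_dotProduct (n : ℕ) (ι : Q → S) (μ : Fin n → Matrix Q Q S)
    (o : Q → S) :
    ∑ q : Fin (n + 1) → Q, ι (q 0) * (List.ofFn fun j => μ j (q j.castSucc) (q j.succ)).prod *
      o (q (Fin.last n)) = ι ᵥ* (List.ofFn μ).prod ⬝ᵥ o := by
  induction n generalizing ι with
  | zero =>
    rw [← (Equiv.funUnique (Fin 1) Q).symm.sum_comp]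
    simp [dotProduct]
  | succ n ih =>
    rw [← (Fin.consEquiv fun _ => Q).sum_comp, Fintype.sum_prod_type, List.ofFn_succ,
      List.prod_cons, ← vecMul_vecMul, ← ih, Finset.sum_comm]
    refine Finset.sum_congr rfl fun q _ => ?_
    simp [Fin.consEquiv, vecMul, dotProduct, List.ofFn_succ, Finset.sum_mul, mul_assoc]

def IsLinearRepresentation (ι : Q → S) (μ : A → Matrix Q Q S) (o : Q → S) (L : List A → S) :
    Prop :=
  ∀ w, L w = ι ᵥ* (w.map μ).prod ⬝ᵥ o

theorem IsLinearRepresentation.reindex {ι : Q → S} {μ : A → Matrix Q Q S} {o : Q → S}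
    {L : List A → S} (h : IsLinearRepresentation ι μ o L) {Q' : Type} [Fintype Q']
    [DecidableEq Q'] (e : Q ≃ Q') :
    IsLinearRepresentation (ι ∘ e.symm) (fun a => Matrix.reindex e e (μ a)) (o ∘ e.symm) L := by
  intro w
  have hprod :
      (w.map fun a => Matrix.reindex e e (μ a)).prod = Matrix.reindex e e (w.map μ).prod := by
    simpa [Function.comp_def] using (map_list_prod (reindexRingEquiv S e) (w.map μ)).symm
  rw [h w, hprod, reindex_apply, submatrix_vecMul_equiv, dotProduct_comp_equiv_symm]
  simp [Function.comp_def]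

theorem IsLinearRepresentation.exists_mulVec_inl {ι : Q → S} {μ : A → Matrix Q Q S}
    {o : Q → S} {L : List A → S} (h : IsLinearRepresentation ι μ o L) :
    ∃ (μ' : A → Matrix (Unit ⊕ Q) (Unit ⊕ Q) S) (o' : Unit ⊕ Q → S),
      ∀ w, L w = ((w.map μ').prod *ᵥ o') (Sum.inl ()) := by
  -- `P` sends the new state to `ι` and fixes the old ones; as `J * P = 1`, it intertwines the
  -- new transitions `P * μ a * J` with the old ones.
  let P : Matrix (Unit ⊕ Q) Q S := fromRows (replicateRow Unit ι) 1
  let J : Matrix Q (Unit ⊕ Q) S := fromCols 0 1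
  have hJP : J * P = 1 := by simp [J, P, fromCols_mul_fromRows]
  have key : ∀ w : List A, (w.map fun a => P * μ a * J).prod * P = P * (w.map μ).prod := by
    intro w
    induction w with
    | nil => simp only [List.map_nil, List.prod_nil, Matrix.one_mul, Matrix.mul_one]
    | cons a w ih =>
      rw [List.map_cons, List.prod_cons, Matrix.mul_assoc, ih, Matrix.mul_assoc, Matrix.mul_assoc,
        ← Matrix.mul_assoc J, hJP, Matrix.one_mul, List.map_cons, List.prod_cons]
  refine ⟨fun a => P * μ a * J, P *ᵥ o, fun w => ?_⟩
  rw [mulVec_mulVec, key, h w, ← mulVec_mulVec, ← dotProduct_mulVec, fromRows_mulVec]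
  rfl

theorem isLinearRepresentation_iff_sum_paths {ι : Q → S} {μ : A → Matrix Q Q S} {o : Q → S}
    {L : List A → S} :
    IsLinearRepresentation ι μ o L ↔ ∀ w : List A, L w =
      ∑ q : Fin (w.length + 1) → Q, ι (q 0) *
        (List.ofFn fun j : Fin w.length => μ (w.get j) (q j.castSucc) (q j.succ)).prod *
        o (q (Fin.last w.length)) := by
  refine forall_congr' fun w => ?_
  rw [sum_paths_eq_vecMul_prod_dotProduct]
  simp [List.ofFn_getElem_eq_map]

end LinearRepresentation

section MatrixRepresentation
variable {M Q : Type} [Monoid M] [Fintype M] [DecidableEq M] [Fintype Q] [DecidableEq Q]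
  (E : M →* Matrix Q Q S) (hE : ∀ s m, Commute (scalar Q s) (E m))

theorem MonoidAlgebra.liftNCRingHom_scalar_apply (f : MonoidAlgebra S M) (i j : Q) :
    liftNCRingHom (scalar Q) E hE f i j = ∑ m, f.coeff m * E m i j := by
  induction f using MonoidAlgebra.induction_linear with
  | zero => simp
  | add f g hf hg => simp [hf, hg, add_mul, Finset.sum_add_distrib]
  | single m s => simp [Finsupp.single_apply, ite_mul]

theorem WeightedMonoidRecognizer.nonempty_of_liftNCRingHom (c : A → MonoidAlgebra S M)
    (o : Q → S) (s₀ : Q) (L : List A → S)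
    (hL : ∀ w, L w = (MonoidAlgebra.liftNCRingHom (scalar Q) E hE (w.map c).prod *ᵥ o) s₀) :
    Nonempty (WeightedMonoidRecognizer A S L) := by
  refine ⟨⟨M, fun w => ((w.map c).prod).coeff, fun m => (E m *ᵥ o) s₀, fun m => ?_,
    fun v w m => ?_, fun w => ?_⟩⟩
  · simp [MonoidAlgebra.one_def, Finsupp.single_apply, eq_comm]
  · rw [List.map_append, List.prod_append, MonoidAlgebra.coeff_mul_antidiag _ _ m
      (Finset.univ.filter fun x : M × M => x.1 * x.2 = m) (by simp), Finset.sum_filter]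
  · rw [hL w]
    simp only [mulVec, dotProduct, MonoidAlgebra.liftNCRingHom_scalar_apply, Finset.sum_mul,
      Finset.mul_sum, mul_assoc]
    exact Finset.sum_comm

end MatrixRepresentation

namespace PEquiv
variable {Q : Type} [Fintype Q] [DecidableEq Q]

/-- Composition in diagrammatic order, opposite to `Equiv.Perm`, so that `toMatrix` is
multiplicative. -/
instance instMonoid {α : Type*} : Monoid (α ≃. α) where
  mul f g := f.trans g
  one := PEquiv.refl α
  mul_assoc := PEquiv.trans_assoc
  one_mul := PEquiv.refl_trans
  mul_one := PEquiv.trans_refl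

instance {α β : Type*} [Finite α] [Finite β] : Finite (α ≃. β) :=
  Finite.of_injective _ DFunLike.coe_injective

def toMatrixHom : (Q ≃. Q) →* Matrix Q Q S where
  toFun := toMatrix
  map_one' := toMatrix_refl
  map_mul' := toMatrix_trans

theorem commute_scalar_toMatrixHom (s : S) (f : Q ≃. Q) :
    Commute (scalar Q s) (toMatrixHom f) := by
  rw [scalar_commute_iff]
  ext i j
  simp only [toMatrixHom, MonoidHom.coe_mk, OneHom.coe_mk, Matrix.smul_apply, toMatrix_apply]
  split_ifs <;> simp

theorem liftNCRingHom_sum_single (μ : Matrix Q Q S) :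
    MonoidAlgebra.liftNCRingHom (scalar Q) toMatrixHom commute_scalar_toMatrixHom
      (∑ i, ∑ j, MonoidAlgebra.single (PEquiv.single i j) (μ i j)) = μ := by
  have hunit : ∀ (i j : Q) (s : S),
      scalar Q s * toMatrixHom (single i j) = Matrix.single i j s := by
    intro i j s
    ext k l
    rw [scalar_apply, ← smul_eq_diagonal_mul]
    simp [toMatrixHom, Matrix.single_apply, PEquiv.single, eq_comm]
  simp only [map_sum, MonoidAlgebra.liftNCRingHom_single, hunit]
  exact (matrix_eq_sum_single μ).symm

end PEquiv

section RightRegular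
variable {M : Type} [Monoid M] [Fintype M] [DecidableEq M]

def rightRegularMatrix (f : M → S) : Matrix M M S :=
  of fun x y => ∑ z, if x * z = y then f z else 0

theorem vecMul_rightRegularMatrix (g f : M → S) (m : M) :
    (g ᵥ* rightRegularMatrix f) m = ∑ x : M × M, if x.1 * x.2 = m then g x.1 * f x.2 else 0 := by
  simp [vecMul, dotProduct, rightRegularMatrix, Finset.mul_sum, Fintype.sum_prod_type, mul_ite]

end RightRegular

theorem WeightedMonoidRecognizer.isLinearRepresentation {L : List A → S}
    (R : WeightedMonoidRecognizer A S L) :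
    IsLinearRepresentation (R.h []) (fun a => rightRegularMatrix (R.h [a])) R.p L := by
  have hvec : ∀ w, R.h [] ᵥ* (w.map fun a => rightRegularMatrix (R.h [a])).prod = R.h w := by
    intro w
    induction w using List.reverseRecOn with
    | nil => exact vecMul_one _
    | append_singleton w a ih =>
      ext m
      rw [List.map_append, List.prod_append, ← vecMul_vecMul, ih, List.map_singleton,
        List.prod_singleton, vecMul_rightRegularMatrix, R.h_mul]
  intro w
  rw [hvec, R.recog]
  rfl

theorem WeightedMonoidRecognizer.nonempty_of_mulVec {Q : Type} [Fintype Q] [DecidableEq Q]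
    (μ : A → Matrix Q Q S) (o : Q → S) (s₀ : Q) (L : List A → S)
    (hL : ∀ w, L w = ((w.map μ).prod *ᵥ o) s₀) :
    Nonempty (WeightedMonoidRecognizer A S L) := by
  let _ : Fintype (Q ≃. Q) := Fintype.ofFinite _
  classical
  refine nonempty_of_liftNCRingHom PEquiv.toMatrixHom PEquiv.commute_scalar_toMatrixHom
    (fun a => ∑ i, ∑ j, MonoidAlgebra.single (PEquiv.single i j) (μ a i j)) o s₀ L fun w => ?_
  rw [hL w, map_list_prod, List.map_map, Function.comp_def]
  simp only [PEquiv.liftNCRingHom_sum_single]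

end

/-- An S-weighted language is computed by a weighted finite automaton over the
    semiring S iff it is effectfully recognized by a finite monoid. -/
theorem wfa_iff_weightedMonoidRecognizer {A S : Type} [Semiring S] (L : List A → S) :
    (∃ (k : ℕ) (i : Fin k → S) (δ : Fin k → A → Fin k → S) (o : Fin k → S),
      ∀ w : List A, L w =
        ∑ q : Fin (w.length + 1) → Fin k,
          i (q 0) *
            (List.ofFn fun j : Fin w.length =>
              δ (q j.castSucc) (w.get j) (q j.succ)).prod *
            o (q (Fin.last w.length)))
    ↔ Nonempty (WeightedMonoidRecognizer A S L) := by
  constructor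
  · rintro ⟨k, ι, δ, o, hL⟩
    have hrep : IsLinearRepresentation ι (fun a => of fun i j => δ i a j) o L :=
      isLinearRepresentation_iff_sum_paths.2 hL
    obtain ⟨μ, o', hL'⟩ := hrep.exists_mulVec_inl
    exact WeightedMonoidRecognizer.nonempty_of_mulVec μ o' (Sum.inl ()) L hL'
  · rintro ⟨R⟩
    obtain ⟨k, ι, μ, o, hrep⟩ : ∃ (k : ℕ) (ι : Fin k → S) (μ : A → Matrix (Fin k) (Fin k) S)
        (o : Fin k → S), IsLinearRepresentation ι μ o L :=
      ⟨_, _, _, _, R.isLinearRepresentation.reindex (Fintype.equivFin R.M)⟩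
    exact ⟨k, ι, fun i a j => μ a i j, o, isLinearRepresentation_iff_sum_paths.1 hrep⟩
end
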